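/- Let s, t ∈ Bⁿ(T₀) be adjacent level-n triangles, with family trees s = s_n, s_{n−1}, …, s₁, s₀ = T₀ and t = t_n, t_{n−1}, …, t₁, t₀ = T₀ (so s_k ∈ B^k(T₀) and s_{k+1} ∈ B(s_k), and similarly for t). Let m = max{k : 0 ≤ k ≤ n, s_m = t_m} (well defined since s₀ = t₀). Then s_k = t_k for all 0 ≤ k ≤ m, and s_k is adjacent to t_k for all m < k ≤ n. -/

import Mathlib

/-- A point of the plane. -/
abbrev Pt := ℝ × ℝ

/-- A triangle in the plane: an ordered triple of points. -/
structure Triangle where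
  v : Fin 3 → Pt

/-- A triangle is nondegenerate if its vertices are affinely independent. -/
def Triangle.Nondeg (T : Triangle) : Prop := AffineIndependent ℝ T.v

/-- The barycenter of a triangle. -/
noncomputable def Triangle.bary (T : Triangle) : Pt :=
  (3 : ℝ)⁻¹ • (T.v 0 + T.v 1 + T.v 2)

/-- The child `[aᵢ, (aᵢ+aⱼ)/2, b]` of a triangle produced by barycentric subdivision. -/
noncomputable def Triangle.child (T : Triangle) (i j : Fin 3) : Triangle :=
  ⟨![T.v i, (2 : ℝ)⁻¹ • (T.v i + T.v j), T.bary]⟩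

/-- The barycentric subdivision of a triangle: the set of its six children. -/
noncomputable def BSub (T : Triangle) : Set Triangle :=
  {t | ∃ i j : Fin 3, i ≠ j ∧ t = T.child i j}

/-- `n`-fold iterated barycentric subdivision `Bⁿ(T₀)`. -/
noncomputable def BIter (T₀ : Triangle) : ℕ → Set Triangle
  | 0 => {T₀}
  | n + 1 => ⋃ t ∈ BIter T₀ n, BSub t

/-- The set of sides of a triangle (as subsets of the plane). -/
def Triangle.sides (T : Triangle) : Set (Set Pt) :=
  {e | ∃ i j : Fin 3, i ≠ j ∧ e = segment ℝ (T.v i) (T.v j)}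

/-- The boundary of a triangle: the union of its three sides. -/
def Triangle.bdry (T : Triangle) : Set Pt :=
  segment ℝ (T.v 0) (T.v 1) ∪ segment ℝ (T.v 1) (T.v 2) ∪ segment ℝ (T.v 0) (T.v 2)

/-- Two triangles are adjacent if they are distinct and share a common side. -/
def Adjacent (s t : Triangle) : Prop := s ≠ t ∧ ∃ e, e ∈ s.sides ∧ e ∈ t.sides

/-!
By induction on `k`, the level-`k` triangles form a conforming triangulation: they are
nondegenerate, two distinct ones meet only in their boundaries, and two sides sharing two
points have the same endpoints. In barycentric coordinates `w` of a parent, the child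
`[aᵢ, mᵢⱼ, b]` is `wᵢ ≥ wⱼ ≥ wₗ` (`l` the third index), so a point of the child on the parent's
boundary lies on the half side `[aᵢ, mᵢⱼ]`. Consequently a child has only one parent (a
nondegenerate triangle does not fit into the boundary of another), which gives `s_k = t_k` for
`k ≤ m`; and a common side of two children of distinct parents lies in a half side of each
parent, so the parents' full sides share two points, hence coincide, and adjacency passes from
level `k + 1` to level `k` for `k > m`.
-/

section

variable {E : Type*} [AddCommGroup E] [Module ℝ E]

lemma eq_midpoint_of_mem_segment_of_mem_segment {p q x : E}
    (hp : x ∈ segment ℝ p (midpoint ℝ p q)) (hq : x ∈ segment ℝ q (midpoint ℝ p q)) :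
    x = midpoint ℝ p q := by
  rw [mem_segment_iff_wbtw] at hp hq
  exact ((wbtw_midpoint ℝ p q).trans_left_right hp).swap_left_iff.1 hq.symm

lemma segment_midpoint_subset (p q : E) : segment ℝ p (midpoint ℝ p q) ⊆ segment ℝ p q :=
  (convex_segment p q).segment_subset (left_mem_segment ℝ p q) (midpoint_mem_segment p q)

lemma AffineIndependent.pair_eq_of_segment_inter {s : Finset E}
    (hs : AffineIndependent ℝ ((↑) : s → E)) {p q p' q' x y : E}
    (hp : p ∈ s) (hq : q ∈ s) (hp' : p' ∈ s) (hq' : q' ∈ s) (hxy : x ≠ y)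
    (hx : x ∈ segment ℝ p q ∩ segment ℝ p' q') (hy : y ∈ segment ℝ p q ∩ segment ℝ p' q') :
    ({p, q} : Set E) = {p', q'} := by
  classical
  set A : Finset E := {p, q} ∩ {p', q'}
  have hinter : convexHull ℝ (A : Set E) = segment ℝ p q ∩ segment ℝ p' q' := by
    rw [Finset.coe_inter, hs.convexHull_inter (t₁ := {p, q}) (t₂ := {p', q'})
      (by simp [Finset.insert_subset_iff, *]) (by simp [Finset.insert_subset_iff, *])]
    simp [convexHull_pair]
  rw [← hinter] at hx hy
  have hA : 2 ≤ A.card := by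
    by_contra hA
    have hsub := Finset.card_le_one_iff_subsingleton.1 (by omega : A.card ≤ 1)
    rw [hsub.convex.convexHull_eq] at hx hy
    exact hxy (hsub hx hy)
  have h₁ : A = {p, q} :=
    Finset.eq_of_subset_of_card_le Finset.inter_subset_left (Finset.card_le_two.trans hA)
  have h₂ : A = {p', q'} :=
    Finset.eq_of_subset_of_card_le Finset.inter_subset_right (Finset.card_le_two.trans hA)
  simpa using congrArg ((↑) : Finset E → Set E) (h₁.symm.trans h₂)

end

lemma interior_segment_eq_empty {V : Type*} [NormedAddCommGroup V] [NormedSpace ℝ V]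
    [FiniteDimensional ℝ V] (hV : 1 < Module.finrank ℝ V) (p q : V) :
    interior (segment ℝ p q) = ∅ := by
  by_contra h
  have htop : affineSpan ℝ {p, q} = ⊤ := affineSpan_eq_top_of_nonempty_interior
    (by rwa [convexHull_pair, Set.nonempty_iff_ne_empty])
  have := collinear_iff_finrank_le_one.1 (collinear_pair ℝ p q)
  rw [← direction_affineSpan, htop, AffineSubspace.direction_top, finrank_top] at this
  omega

lemma isClosed_segment {V : Type*} [NormedAddCommGroup V] [NormedSpace ℝ V] (p q : V) :
    IsClosed (segment ℝ p q) := by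
  rw [← convexHull_pair]
  exact ((Set.toFinite _).isCompact_convexHull (𝕜 := ℝ)).isClosed

/-- For `i ≠ j`, the remaining index of `Fin 3`: it is `-(i + j) = 2 * (i + j)`. -/
def third (i j : Fin 3) : Fin 3 := 2 * (i + j)

lemma third_ne_left : ∀ {i j : Fin 3}, i ≠ j → third i j ≠ i := by decide

lemma third_ne_right : ∀ {i j : Fin 3}, i ≠ j → third i j ≠ j := by decide

lemma sum_third (f : Fin 3 → ℝ) {i j : Fin 3} (hij : i ≠ j) :
    f i + f j + f (third i j) = f 0 + f 1 + f 2 := by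
  fin_cases i <;> fin_cases j <;> simp_all [third] <;> ring

lemma pair_cases_of_ne : ∀ {i j i' j' : Fin 3}, i ≠ j → i' ≠ j' →
    (i' = i ∧ j' = j) ∨ (i' = i ∧ j' = third i j) ∨ (i' = j ∧ j' = i) ∨
    (i' = j ∧ j' = third i j) ∨ (i' = third i j ∧ j' = i) ∨ (i' = third i j ∧ j' = j) := by
  decide

namespace Triangle

def region (T : Triangle) : Set Pt := convexHull ℝ (Set.range T.v)

def comb (T : Triangle) (w : Fin 3 → ℝ) : Pt := w 0 • T.v 0 + w 1 • T.v 1 + w 2 • T.v 2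

variable {T : Triangle}

lemma comb_eq_of_ne (T : Triangle) {i j : Fin 3} (hij : i ≠ j) (w : Fin 3 → ℝ) :
    T.comb w = w i • T.v i + w j • T.v j + w (third i j) • T.v (third i j) := by
  fin_cases i <;> fin_cases j <;> simp_all [comb, third] <;> abel

lemma bary_eq_of_ne (T : Triangle) {i j : Fin 3} (hij : i ≠ j) :
    T.bary = (3 : ℝ)⁻¹ • (T.v i + T.v j + T.v (third i j)) := by
  fin_cases i <;> fin_cases j <;> simp_all [bary, third] <;> module

lemma mem_region_iff {x : Pt} :
    x ∈ T.region ↔ ∃ w : Fin 3 → ℝ, (∀ i, 0 ≤ w i) ∧ w 0 + w 1 + w 2 = 1 ∧ T.comb w = x := by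
  classical
  have hrange : Set.range T.v =
      Fintype.linearCombination ℝ T.v '' Set.range fun i => Pi.single i 1 := by
    rw [← Set.range_comp]; congr 1; ext i : 1; simp
  rw [region, hrange, ← LinearMap.image_convexHull, convexHull_rangle_single_eq_stdSimplex]
  simp [stdSimplex, Fin.sum_univ_three, Fintype.linearCombination_apply, comb, and_assoc]

lemma nondeg_iff :
    T.Nondeg ↔ ∀ w : Fin 3 → ℝ, w 0 + w 1 + w 2 = 0 → T.comb w = 0 → ∀ i, w i = 0 := by
  simp only [Nondeg, affineIndependent_iff_of_fintype, Fin.sum_univ_three, comb]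
  refine forall_congr' fun w => imp_congr_right fun hw => ?_
  rw [Finset.weightedVSub_eq_linear_combination _ (by rwa [Fin.sum_univ_three]),
    Fin.sum_univ_three]

lemma Nondeg.eq_of_comb_eq (hT : T.Nondeg) {w w' : Fin 3 → ℝ} (hw : w 0 + w 1 + w 2 = 1)
    (hw' : w' 0 + w' 1 + w' 2 = 1) (h : T.comb w = T.comb w') : w = w' := by
  have hsub : T.comb (w - w') = T.comb w - T.comb w' := by
    simp only [comb, Pi.sub_apply, sub_smul]; abel
  funext i
  simpa [sub_eq_zero] using nondeg_iff.1 hT (w - w') (by simp only [Pi.sub_apply]; linarith)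
    (by rw [hsub, h, sub_self]) i

lemma comb_mem_segment {a b : Fin 3} (hab : a ≠ b) {u : Fin 3 → ℝ} (hu : ∀ i, 0 ≤ u i)
    (hu1 : u 0 + u 1 + u 2 = 1) (hu0 : u (third a b) = 0) :
    T.comb u ∈ segment ℝ (T.v a) (T.v b) :=
  ⟨u a, u b, hu a, hu b, by linarith [sum_third u hab], by simp [comb_eq_of_ne T hab, hu0]⟩

lemma segment_subset_region (a b : Fin 3) : segment ℝ (T.v a) (T.v b) ⊆ T.region :=
  segment_subset_convexHull (Set.mem_range_self a) (Set.mem_range_self b)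

lemma segment_subset_bdry (a b : Fin 3) : segment ℝ (T.v a) (T.v b) ⊆ T.bdry := by
  have h₀₁ : segment ℝ (T.v 0) (T.v 1) ⊆ T.bdry := fun z hz => Or.inl (Or.inl hz)
  have h₁₂ : segment ℝ (T.v 1) (T.v 2) ⊆ T.bdry := fun z hz => Or.inl (Or.inr hz)
  have h₀₂ : segment ℝ (T.v 0) (T.v 2) ⊆ T.bdry := fun z hz => Or.inr hz
  fin_cases a <;> fin_cases b <;> simp only [segment_same, Set.singleton_subset_iff] <;>
    first
    | assumption
    | (rw [segment_symm]; assumption)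
    | exact h₀₁ (left_mem_segment ..)
    | exact h₀₁ (right_mem_segment ..)
    | exact h₁₂ (right_mem_segment ..)

lemma exists_coord_eq_zero_of_mem_bdry {x : Pt} (hx : x ∈ T.bdry) :
    ∃ w : Fin 3 → ℝ, (∀ i, 0 ≤ w i) ∧ w 0 + w 1 + w 2 = 1 ∧ T.comb w = x ∧ ∃ c, w c = 0 := by
  rcases hx with (⟨a, b, ha, hb, hab, rfl⟩ | ⟨a, b, ha, hb, hab, rfl⟩) |
    ⟨a, b, ha, hb, hab, rfl⟩
  · refine ⟨![a, b, 0], ?_, by simpa using hab, by simp [comb], 2, rfl⟩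
    intro i; fin_cases i <;> simp [ha, hb]
  · refine ⟨![0, a, b], ?_, by simpa using hab, by simp [comb], 0, rfl⟩
    intro i; fin_cases i <;> simp [ha, hb]
  · refine ⟨![a, 0, b], ?_, by simpa using hab, by simp [comb], 1, rfl⟩
    intro i; fin_cases i <;> simp [ha, hb]

lemma Nondeg.pair_eq_of_segment_inter (hT : T.Nondeg) {a b a' b' : Fin 3} {x y : Pt}
    (hxy : x ≠ y) (hx : x ∈ segment ℝ (T.v a) (T.v b) ∩ segment ℝ (T.v a') (T.v b'))
    (hy : y ∈ segment ℝ (T.v a) (T.v b) ∩ segment ℝ (T.v a') (T.v b')) :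
    ({T.v a, T.v b} : Set Pt) = {T.v a', T.v b'} := by
  classical
  have hind : AffineIndependent ℝ ((↑) : ↥(Finset.univ.image T.v) → Pt) := by
    have h := hT.range
    rwa [← Set.image_univ, ← Finset.coe_univ, ← Finset.coe_image] at h
  exact hind.pair_eq_of_segment_inter (by simp) (by simp) (by simp) (by simp) hxy hx hy

lemma Nondeg.not_region_subset_bdry (hT : T.Nondeg) (P : Triangle) : ¬ T.region ⊆ P.bdry := by
  intro hsub
  have hint : (interior T.region).Nonempty :=
    interior_convexHull_nonempty_iff_affineSpan_eq_top.2
      (hT.affineSpan_eq_top_iff_card_eq_finrank_add_one.2 (by simp))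
  have hdim : 1 < Module.finrank ℝ Pt := by simp
  have hbdry : interior P.bdry = ∅ := by
    rw [bdry, interior_union_isClosed_of_interior_empty
      ((isClosed_segment _ _).union (isClosed_segment _ _))
      (interior_segment_eq_empty hdim _ _), interior_union_isClosed_of_interior_empty
      (isClosed_segment _ _) (interior_segment_eq_empty hdim _ _), interior_segment_eq_empty hdim]
  exact (hint.mono (interior_mono hsub)).ne_empty hbdry

variable {i j : Fin 3}

/-- The coordinates with respect to `T` of the point with coordinates `u` with respect to
`T.child i j` (see `comb_child`). -/
noncomputable def childCoord (i j : Fin 3) (u : Fin 3 → ℝ) (c : Fin 3) : ℝ :=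
  (if c = i then u 0 + u 1 / 2 else if c = j then u 1 / 2 else 0) + u 2 / 3

lemma childCoord_left (u : Fin 3 → ℝ) : childCoord i j u i = u 0 + u 1 / 2 + u 2 / 3 := by
  simp [childCoord]

lemma childCoord_right (hij : i ≠ j) (u : Fin 3 → ℝ) :
    childCoord i j u j = u 1 / 2 + u 2 / 3 := by
  simp [childCoord, hij.symm]

lemma childCoord_third (hij : i ≠ j) (u : Fin 3 → ℝ) :
    childCoord i j u (third i j) = u 2 / 3 := by
  simp [childCoord, third_ne_left hij, third_ne_right hij]

lemma sum_childCoord (hij : i ≠ j) (u : Fin 3 → ℝ) :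
    childCoord i j u 0 + childCoord i j u 1 + childCoord i j u 2 = u 0 + u 1 + u 2 := by
  rw [← sum_third _ hij, childCoord_left, childCoord_right hij, childCoord_third hij]
  ring

lemma comb_child (hij : i ≠ j) (u : Fin 3 → ℝ) :
    (T.child i j).comb u = T.comb (childCoord i j u) := by
  rw [comb_eq_of_ne T hij, childCoord_left, childCoord_right hij, childCoord_third hij]
  simp only [comb, child, bary_eq_of_ne T hij, Matrix.cons_val_zero, Matrix.cons_val_one,
    Matrix.cons_val_two, Matrix.head_cons, Matrix.tail_cons]
  module

lemma div_three_le_childCoord {u : Fin 3 → ℝ} (hu : ∀ c, 0 ≤ u c) (c : Fin 3) :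
    u 2 / 3 ≤ childCoord i j u c := by
  unfold childCoord
  split_ifs <;> linarith [hu 0, hu 1]

@[simp] lemma child_v_zero : (T.child i j).v 0 = T.v i := rfl

@[simp] lemma child_v_one : (T.child i j).v 1 = midpoint ℝ (T.v i) (T.v j) := by
  simp [child, midpoint_eq_smul_add]

@[simp] lemma child_v_two : (T.child i j).v 2 = T.bary := rfl

lemma Nondeg.child (hT : T.Nondeg) (hij : i ≠ j) : (T.child i j).Nondeg := by
  refine nondeg_iff.2 fun u hu0 hu => ?_
  have hw := nondeg_iff.1 hT (childCoord i j u) (by rw [sum_childCoord hij]; exact hu0)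
    (by rw [← comb_child hij, hu])
  have h₁ := hw (third i j)
  have h₂ := hw j
  have h₃ := hw i
  rw [childCoord_third hij] at h₁
  rw [childCoord_right hij] at h₂
  rw [childCoord_left] at h₃
  intro c; fin_cases c <;> simp <;> linarith

lemma child_region_subset : (T.child i j).region ⊆ T.region := by
  refine convexHull_min (Set.range_subset_iff.2 fun c => ?_) (convex_convexHull ℝ _)
  fin_cases c
  · exact subset_convexHull ℝ _ (Set.mem_range_self i)
  · exact segment_subset_region i j (by simpa using midpoint_mem_segment (T.v i) (T.v j))
  · exact mem_region_iff.2 ⟨fun _ => 3⁻¹, fun _ => by norm_num, by norm_num,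
      by simp [comb, bary]⟩

lemma Nondeg.child_inter_bdry_subset (hT : T.Nondeg) (hij : i ≠ j) :
    (T.child i j).region ∩ T.bdry ⊆ segment ℝ (T.v i) (midpoint ℝ (T.v i) (T.v j)) := by
  rintro x ⟨hx, hxb⟩
  obtain ⟨u, hu, hu1, rfl⟩ := mem_region_iff.1 hx
  obtain ⟨w, hw, hw1, hwx, c, hc⟩ := exists_coord_eq_zero_of_mem_bdry hxb
  have hcoord :=
    hT.eq_of_comb_eq hw1 (by rw [sum_childCoord hij, hu1]) (hwx.trans (comb_child hij u))
  have hu2 : u 2 = 0 := by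
    have := div_three_le_childCoord (i := i) (j := j) hu c
    rw [← hcoord, hc] at this
    linarith [hu 2]
  simpa using comb_mem_segment (T := T.child i j) (a := 0) (b := 1) (by decide) hu hu1 hu2

lemma Nondeg.exists_childCoord_eq (hT : T.Nondeg) (hij : i ≠ j) {i' j' : Fin 3}
    (hij' : i' ≠ j') {x : Pt} (hx : x ∈ (T.child i j).region ∩ (T.child i' j').region) :
    ∃ u u' : Fin 3 → ℝ, (∀ c, 0 ≤ u c) ∧ u 0 + u 1 + u 2 = 1 ∧ (T.child i j).comb u = x ∧
      (∀ c, 0 ≤ u' c) ∧ childCoord i j u = childCoord i' j' u' := by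
  obtain ⟨u, hu, hu1, rfl⟩ := mem_region_iff.1 hx.1
  obtain ⟨u', hu', hu1', hux⟩ := mem_region_iff.1 hx.2
  refine ⟨u, u', hu, hu1, rfl, hu', hT.eq_of_comb_eq ?_ ?_ ?_⟩
  · rw [sum_childCoord hij, hu1]
  · rw [sum_childCoord hij', hu1']
  · rw [← comb_child hij, ← comb_child hij', hux]

/-- Two distinct children of `T` meet inside a common side, or only in the barycenter, which is
the case `a = b = 2`. -/
lemma Nondeg.child_inter_child_subset (hT : T.Nondeg) (hij : i ≠ j) {i' j' : Fin 3}
    (hij' : i' ≠ j') (hne : T.child i j ≠ T.child i' j') :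
    ∃ a b : Fin 3, (T.child i j).v a = (T.child i' j').v a ∧
      (T.child i j).v b = (T.child i' j').v b ∧
      (T.child i j).region ∩ (T.child i' j').region ⊆
        segment ℝ ((T.child i j).v a) ((T.child i j).v b) := by
  have hki := third_ne_left hij
  have hkj := third_ne_right hij
  rcases pair_cases_of_ne hij hij' with
    ⟨h₁, h₂⟩ | ⟨h₁, h₂⟩ | ⟨h₁, h₂⟩ | ⟨h₁, h₂⟩ | ⟨h₁, h₂⟩ | ⟨h₁, h₂⟩ <;> subst i' j'
  · exact absurd rfl hne
  · refine ⟨0, 2, rfl, rfl, fun x hx => ?_⟩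
    obtain ⟨u, u', hu, hu1, rfl, hu', h⟩ := hT.exists_childCoord_eq hij hij' hx
    have hj := congrFun h j
    have hk := congrFun h (third i j)
    simp [childCoord, hij.symm, hki, hkj, hkj.symm] at hj hk
    exact comb_mem_segment (by decide) hu hu1
      (by show u 1 = 0; linarith [hu 1, hu' 1])
  · refine ⟨1, 2, by simp [midpoint_comm], rfl, fun x hx => ?_⟩
    obtain ⟨u, u', hu, hu1, rfl, hu', h⟩ := hT.exists_childCoord_eq hij hij' hx
    have hi := congrFun h i
    have hj := congrFun h j
    simp [childCoord, hij, hij.symm] at hi hj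
    exact comb_mem_segment (by decide) hu hu1
      (by show u 0 = 0; linarith [hu 0, hu' 0])
  all_goals
    refine ⟨2, 2, rfl, rfl, fun x hx => ?_⟩
    obtain ⟨u, u', hu, hu1, rfl, hu', h⟩ := hT.exists_childCoord_eq hij hij' hx
    have hi := congrFun h i
    have hj := congrFun h j
    have hk := congrFun h (third i j)
    simp [childCoord, hij, hij.symm, hki, hkj, hki.symm, hkj.symm] at hi hj hk
    have h₀ : u 0 = 0 := by linarith [hu 0, hu 1, hu' 0, hu' 1]
    have h₁ : u 1 = 0 := by linarith [hu 0, hu 1, hu' 0, hu' 1]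
    have h₂ : u 2 = 1 := by linarith
    simp [segment_same, comb, h₀, h₁, h₂]

end Triangle

open Triangle

structure Conforming (F : Set Triangle) : Prop where
  nondeg : ∀ P ∈ F, P.Nondeg
  inter_subset_bdry : ∀ P ∈ F, ∀ Q ∈ F, P ≠ Q → P.region ∩ Q.region ⊆ P.bdry
  pair_eq : ∀ P ∈ F, ∀ Q ∈ F, ∀ (a b a' b' : Fin 3) (x y : Pt), x ≠ y →
    x ∈ segment ℝ (P.v a) (P.v b) ∩ segment ℝ (Q.v a') (Q.v b') →
    y ∈ segment ℝ (P.v a) (P.v b) ∩ segment ℝ (Q.v a') (Q.v b') →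
    ({P.v a, P.v b} : Set Pt) = {Q.v a', Q.v b'}

lemma conforming_singleton {T : Triangle} (hT : T.Nondeg) : Conforming {T} where
  nondeg := by simpa using hT
  inter_subset_bdry := by simp
  pair_eq := by
    rintro P rfl Q rfl a b a' b' x y hxy hx hy
    exact hT.pair_eq_of_segment_inter hxy hx hy

namespace Conforming

variable {F : Set Triangle} {P Q : Triangle} {i j i' j' : Fin 3} {x y : Pt}

lemma mem_half_side_of_mem_inter (hF : Conforming F) (hP : P ∈ F) (hQ : Q ∈ F) (hPQ : P ≠ Q)
    (hij : i ≠ j) (hx : x ∈ (P.child i j).region ∩ (Q.child i' j').region) :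
    x ∈ segment ℝ (P.v i) (midpoint ℝ (P.v i) (P.v j)) :=
  (hF.nondeg P hP).child_inter_bdry_subset hij ⟨hx.1, hF.inter_subset_bdry P hP Q hQ hPQ
    ⟨child_region_subset hx.1, child_region_subset hx.2⟩⟩

lemma pair_eq_of_half_sides (hF : Conforming F) (hP : P ∈ F) (hQ : Q ∈ F) (hxy : x ≠ y)
    (hx : x ∈ segment ℝ (P.v i) (midpoint ℝ (P.v i) (P.v j)) ∩
      segment ℝ (Q.v i') (midpoint ℝ (Q.v i') (Q.v j')))
    (hy : y ∈ segment ℝ (P.v i) (midpoint ℝ (P.v i) (P.v j)) ∩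
      segment ℝ (Q.v i') (midpoint ℝ (Q.v i') (Q.v j'))) :
    ({P.v i, midpoint ℝ (P.v i) (P.v j)} : Set Pt) =
      {Q.v i', midpoint ℝ (Q.v i') (Q.v j')} := by
  have hside := hF.pair_eq P hP Q hQ i j i' j' x y hxy
    ⟨segment_midpoint_subset _ _ hx.1, segment_midpoint_subset _ _ hx.2⟩
    ⟨segment_midpoint_subset _ _ hy.1, segment_midpoint_subset _ _ hy.2⟩
  rcases Set.pair_eq_pair_iff.1 hside with ⟨h₁, h₂⟩ | ⟨h₁, h₂⟩
  · rw [h₁, h₂]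
  · -- opposite halves of one segment meet only in its midpoint
    obtain ⟨hx₁, hx₂⟩ := hx
    obtain ⟨hy₁, hy₂⟩ := hy
    rw [← h₁, ← h₂, midpoint_comm] at hx₂ hy₂
    exact absurd ((eq_midpoint_of_mem_segment_of_mem_segment hx₁ hx₂).trans
      (eq_midpoint_of_mem_segment_of_mem_segment hy₁ hy₂).symm) hxy

lemma child_inter_subset_bdry (hF : Conforming F) (hP : P ∈ F) (hQ : Q ∈ F) (hij : i ≠ j)
    (hij' : i' ≠ j') (hne : P.child i j ≠ Q.child i' j') :
    (P.child i j).region ∩ (Q.child i' j').region ⊆ (P.child i j).bdry := by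
  rcases eq_or_ne P Q with rfl | hPQ
  · obtain ⟨a, b, -, -, hsub⟩ := (hF.nondeg P hP).child_inter_child_subset hij hij' hne
    exact hsub.trans (segment_subset_bdry a b)
  · intro x hx
    exact segment_subset_bdry 0 1
      (by simpa using hF.mem_half_side_of_mem_inter hP hQ hPQ hij hx)

lemma child_pair_eq (hF : Conforming F) (hP : P ∈ F) (hQ : Q ∈ F) (hij : i ≠ j)
    (hij' : i' ≠ j') {a b a' b' : Fin 3} (hxy : x ≠ y)
    (hx : x ∈ segment ℝ ((P.child i j).v a) ((P.child i j).v b) ∩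
      segment ℝ ((Q.child i' j').v a') ((Q.child i' j').v b'))
    (hy : y ∈ segment ℝ ((P.child i j).v a) ((P.child i j).v b) ∩
      segment ℝ ((Q.child i' j').v a') ((Q.child i' j').v b')) :
    ({(P.child i j).v a, (P.child i j).v b} : Set Pt) =
      {(Q.child i' j').v a', (Q.child i' j').v b'} := by
  have hc := (hF.nondeg P hP).child hij
  have hd := (hF.nondeg Q hQ).child hij'
  have hxr : x ∈ (P.child i j).region ∩ (Q.child i' j').region :=
    ⟨segment_subset_region a b hx.1, segment_subset_region a' b' hx.2⟩
  have hyr : y ∈ (P.child i j).region ∩ (Q.child i' j').region :=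
    ⟨segment_subset_region a b hy.1, segment_subset_region a' b' hy.2⟩
  by_cases hcd : P.child i j = Q.child i' j'
  · rw [hcd] at hx hy ⊢
    exact hd.pair_eq_of_segment_inter hxy hx hy
  rcases eq_or_ne P Q with rfl | hPQ
  · obtain ⟨a₀, b₀, ha₀, hb₀, hsub⟩ := (hF.nondeg P hP).child_inter_child_subset hij hij' hcd
    have hx₀ := hsub hxr
    have hy₀ := hsub hyr
    rw [hc.pair_eq_of_segment_inter hxy ⟨hx.1, hx₀⟩ ⟨hy.1, hy₀⟩, ha₀, hb₀]
    rw [ha₀, hb₀] at hx₀ hy₀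
    exact hd.pair_eq_of_segment_inter hxy ⟨hx₀, hx.2⟩ ⟨hy₀, hy.2⟩
  · have hxP := hF.mem_half_side_of_mem_inter hP hQ hPQ hij hxr
    have hyP := hF.mem_half_side_of_mem_inter hP hQ hPQ hij hyr
    have hxQ := hF.mem_half_side_of_mem_inter hQ hP hPQ.symm hij' (Set.inter_comm _ _ ▸ hxr)
    have hyQ := hF.mem_half_side_of_mem_inter hQ hP hPQ.symm hij' (Set.inter_comm _ _ ▸ hyr)
    have hc01 := hc.pair_eq_of_segment_inter (a' := 0) (b' := 1) hxy
      ⟨hx.1, by simpa using hxP⟩ ⟨hy.1, by simpa using hyP⟩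
    have hd01 := hd.pair_eq_of_segment_inter (a' := 0) (b' := 1) hxy
      ⟨hx.2, by simpa using hxQ⟩ ⟨hy.2, by simpa using hyQ⟩
    rw [hc01, hd01]
    simpa using hF.pair_eq_of_half_sides hP hQ hxy ⟨hxP, hxQ⟩ ⟨hyP, hyQ⟩

lemma subdivide (hF : Conforming F) : Conforming (⋃ P ∈ F, BSub P) where
  nondeg := by
    simp only [Set.mem_iUnion₂]
    rintro _ ⟨P, hP, i, j, hij, rfl⟩
    exact (hF.nondeg P hP).child hij
  inter_subset_bdry := by
    simp only [Set.mem_iUnion₂]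
    rintro _ ⟨P, hP, i, j, hij, rfl⟩ _ ⟨Q, hQ, i', j', hij', rfl⟩ hne
    exact hF.child_inter_subset_bdry hP hQ hij hij' hne
  pair_eq := by
    simp only [Set.mem_iUnion₂]
    rintro _ ⟨P, hP, i, j, hij, rfl⟩ _ ⟨Q, hQ, i', j', hij', rfl⟩ a b a' b' x y hxy hx hy
    exact hF.child_pair_eq hP hQ hij hij' hxy hx hy

lemma eq_of_mem_BSub (hF : Conforming F) (hP : P ∈ F) (hQ : Q ∈ F) {c : Triangle}
    (hcP : c ∈ BSub P) (hcQ : c ∈ BSub Q) : P = Q := by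
  by_contra hPQ
  obtain ⟨i, j, hij, rfl⟩ := hcP
  obtain ⟨i', j', -, hc⟩ := hcQ
  refine ((hF.nondeg P hP).child hij).not_region_subset_bdry P fun x hx =>
    hF.inter_subset_bdry P hP Q hQ hPQ ⟨child_region_subset hx, child_region_subset (hc ▸ hx)⟩

lemma adjacent_of_adjacent_children (hF : Conforming F) (hP : P ∈ F) (hQ : Q ∈ F)
    (hPQ : P ≠ Q) {c d : Triangle} (hcP : c ∈ BSub P) (hdQ : d ∈ BSub Q) (hcd : Adjacent c d) :
    Adjacent P Q := by
  obtain ⟨i, j, hij, rfl⟩ := hcP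
  obtain ⟨i', j', hij', rfl⟩ := hdQ
  obtain ⟨-, -, ⟨a, b, hab, rfl⟩, a', b', -, he⟩ := hcd
  have hxy : (P.child i j).v a ≠ (P.child i j).v b :=
    fun h => hab (((hF.nondeg P hP).child hij).injective h)
  have hr : segment ℝ ((P.child i j).v a) ((P.child i j).v b) ⊆
      (P.child i j).region ∩ (Q.child i' j').region :=
    fun z hz => ⟨segment_subset_region a b hz, segment_subset_region a' b' (he ▸ hz)⟩
  have hhalf : ∀ z ∈ segment ℝ ((P.child i j).v a) ((P.child i j).v b),
      z ∈ segment ℝ (P.v i) (P.v j) ∩ segment ℝ (Q.v i') (Q.v j') := fun z hz =>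
    ⟨segment_midpoint_subset _ _ (hF.mem_half_side_of_mem_inter hP hQ hPQ hij (hr hz)),
      segment_midpoint_subset _ _ (hF.mem_half_side_of_mem_inter hQ hP hPQ.symm hij'
        (Set.inter_comm _ _ ▸ hr hz))⟩
  have hside := hF.pair_eq P hP Q hQ i j i' j' _ _ hxy (hhalf _ (left_mem_segment ..))
    (hhalf _ (right_mem_segment ..))
  exact ⟨hPQ, _, ⟨i, j, hij, rfl⟩, i', j', hij',
    by rw [← convexHull_pair, hside, convexHull_pair]⟩

end Conforming

lemma conforming_BIter {T₀ : Triangle} (hT₀ : T₀.Nondeg) : ∀ n, Conforming (BIter T₀ n)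
  | 0 => conforming_singleton hT₀
  | n + 1 => (conforming_BIter hT₀ n).subdivide

lemma mem_BIter_of_chain {T₀ : Triangle} {n : ℕ} {s : ℕ → Triangle} (hs0 : s 0 = T₀)
    (hs : ∀ k < n, s (k + 1) ∈ BSub (s k)) : ∀ k ≤ n, s k ∈ BIter T₀ k
  | 0, _ => hs0
  | k + 1, hk => Set.mem_biUnion (mem_BIter_of_chain hs0 hs k (by omega)) (hs k hk)

/-- if `s, t ∈ Bⁿ(T₀)` are adjacent, with family trees
`s = s_n ⊂ … ⊂ s₀ = T₀` and `t = t_n ⊂ … ⊂ t₀ = T₀`, and `m` is the largest index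
`≤ n` with `s_m = t_m`, then `s_k = t_k` for all `k ≤ m` and `s_k` is adjacent to `t_k`
for all `m < k ≤ n`. -/
theorem stmt17 (T₀ : Triangle) (hT₀ : T₀.Nondeg) (n : ℕ)
    (s t : ℕ → Triangle) (hs0 : s 0 = T₀) (ht0 : t 0 = T₀)
    (hs : ∀ k < n, s (k + 1) ∈ BSub (s k)) (ht : ∀ k < n, t (k + 1) ∈ BSub (t k))
    (hadj : Adjacent (s n) (t n))
    (m : ℕ) (hmn : m ≤ n) (hsm : s m = t m) (hmax : ∀ k ≤ n, s k = t k → k ≤ m) :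
    (∀ k ≤ m, s k = t k) ∧ (∀ k, m < k → k ≤ n → Adjacent (s k) (t k)) := by
  have hF := conforming_BIter hT₀
  have hsF := mem_BIter_of_chain hs0 hs
  have htF := mem_BIter_of_chain ht0 ht
  refine ⟨fun k hk => ?_, fun k hmk hkn => ?_⟩
  · induction hk using Nat.decreasingInduction with
    | self => exact hsm
    | of_succ k hk ih =>
      exact (hF k).eq_of_mem_BSub (hsF k (by omega)) (htF k (by omega)) (hs k (by omega))
        (ih ▸ ht k (by omega))
  · induction hkn using Nat.decreasingInduction with
    | self => exact hadj
    | of_succ k hk ih =>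
      exact (hF k).adjacent_of_adjacent_children (hsF k hk.le) (htF k hk.le)
        (fun h => by have := hmax k hk.le h; omega) (hs k hk) (ht k hk) (ih (by omega))
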